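/- Almost-sure stabilization of the resampling difference for a stationary Poisson process: let P, P' be independent unit-intensity homogeneous Poisson processes on R^d, z ∈ Z^d, Q(z) = (−1/2,1/2]^d + z, P''(z) = (P \ Q(z)) ∪ (P' ∩ Q(z)), and B_n = [−n^{1/d}/2, n^{1/d}/2]^d. Then for each (r,s) with 0 ≤ r ≤ s, there exist an a.s. finite integer-valued random variable Δ_z^{r,s}(∞) and an a.s. finite random N_0 such that β_q^{r,s}(K(P ∩ B_n)) − β_q^{r,s}(K(P''(z) ∩ B_n)) = Δ_z^{r,s}(∞) almost surely for all n ≥ N_0. -/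

import Mathlib

set_option autoImplicit false

open Submodule

/-- An abstract simplicial complex on vertex type `V`: a collection of finite nonempty
subsets closed under taking nonempty subsets. -/
def IsComplex {V : Type*} (K : Set (Finset V)) : Prop :=
  ∀ σ ∈ K, σ.Nonempty ∧ ∀ τ : Finset V, τ ⊆ σ → τ.Nonempty → τ ∈ K

/-- The space of all `F₂`-chains on the vertex type `V`: the free `F₂`-vector space on
all finite subsets of `V`. -/
abbrev Chain (V : Type*) := Finset V →₀ ZMod 2

/-- The boundary map with `F₂`-coefficients, sending a simplex to the sum of its
codimension-one faces. -/
noncomputable def bdry (V : Type*) : Chain V →ₗ[ZMod 2] Chain V := by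
  classical
  exact Finsupp.lsum (ZMod 2) fun σ =>
    LinearMap.toSpanSingleton (ZMod 2) (Chain V) (∑ x ∈ σ, Finsupp.single (σ.erase x) 1)

/-- `C_q(K)`: the chain group of a complex `K`, the `F₂`-span of its `q`-simplices,
viewed as a subspace of the free `F₂`-vector space on all finite vertex sets. -/
noncomputable def chainGroup {V : Type*} (K : Set (Finset V)) (q : ℕ) :
    Submodule (ZMod 2) (Chain V) :=
  Submodule.span (ZMod 2)
    {c | ∃ σ ∈ K, σ.card = q + 1 ∧ c = Finsupp.single σ (1 : ZMod 2)}

/-- `Z_q(K)`: the cycle group of a complex `K`. -/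
noncomputable def cycleGroup {V : Type*} (K : Set (Finset V)) (q : ℕ) :
    Submodule (ZMod 2) (Chain V) :=
  chainGroup K q ⊓ LinearMap.ker (bdry V)

/-- `B_q(K)`: the boundary group of a complex `K`. -/
noncomputable def boundaryGroup {V : Type*} (K : Set (Finset V)) (q : ℕ) :
    Submodule (ZMod 2) (Chain V) :=
  Submodule.map (bdry V) (chainGroup K (q + 1))

/-- The `(r,s)`-persistent Betti number of a filtration
`Kf`: `dim (Z_q(K_r) / (Z_q(K_r) ∩ B_q(K_s)))`. -/
noncomputable def pBetti {V : Type*} (Kf : ℝ → Set (Finset V)) (q : ℕ) (r s : ℝ) : ℕ :=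
  Module.finrank (ZMod 2)
    (↥(cycleGroup (Kf r) q) ⧸
      (Submodule.comap (cycleGroup (Kf r) q).subtype (boundaryGroup (Kf s) q) :
        Submodule (ZMod 2) ↥(cycleGroup (Kf r) q)))

/-- Points of `ℝ^d`. -/
abbrev Pt (d : ℕ) := EuclideanSpace ℝ (Fin d)

/-- The Čech complex at scale `r` of a set `S ⊆ ℝ^d`: all finite nonempty `σ ⊆ S` whose
closed `r`-balls have a common point. -/
def cechCx (d : ℕ) (r : ℝ) (S : Set (Pt d)) : Set (Finset (Pt d)) :=
  {σ | ↑σ ⊆ S ∧ σ.Nonempty ∧ (⋂ x ∈ (σ : Set (Pt d)), Metric.closedBall x r).Nonempty}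

/-- The Vietoris–Rips complex at scale `r` of a set `S ⊆ ℝ^d`: all finite nonempty
`σ ⊆ S` of diameter at most `r`. -/
def ripsCx (d : ℕ) (r : ℝ) (S : Set (Pt d)) : Set (Finset (Pt d)) :=
  {σ | ↑σ ⊆ S ∧ σ.Nonempty ∧ Metric.diam (σ : Set (Pt d)) ≤ r}

/-- The `(r,s)`-persistent Betti number of the filtration `Kx` (Čech or Rips) built on the
point set `S ⊆ ℝ^d`. -/
noncomputable def pBettiPts {d : ℕ} (Kx : ℝ → Set (Pt d) → Set (Finset (Pt d)))
    (q : ℕ) (r s : ℝ) (S : Set (Pt d)) : ℕ :=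
  pBetti (fun t => Kx t S) q r s

open MeasureTheory in
/-- A point process `P` on `ℝ^d` is a Poisson point process with intensity function `f`
(w.r.t. the probability measure `μ`) if it is almost surely locally finite, the number of
its points in a region `A` is Poisson distributed with mean `∫ x in A, f x`, and the
point counts in disjoint regions are independent. -/
structure IsPoissonPP {Ω : Type*} [MeasurableSpace Ω] (μ : Measure Ω) {d : ℕ}
    (f : Pt d → ℝ) (P : Ω → Set (Pt d)) : Prop where
  locallyFinite : ∀ᵐ ω ∂μ, ∀ C : Set (Pt d), IsCompact C → (P ω ∩ C).Finite
  counts : ∀ A : Set (Pt d), MeasurableSet A → IntegrableOn f A volume →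
    ∀ n : ℕ, μ {ω | (P ω ∩ A).ncard = n ∧ (P ω ∩ A).Finite} =
      ENNReal.ofReal (Real.exp (-(∫ x in A, f x)) * (∫ x in A, f x) ^ n / n.factorial)
  indep : ∀ A B : Set (Pt d), MeasurableSet A → MeasurableSet B → Disjoint A B →
    ∀ sA sB : Set ℕ,
      μ ({ω | (P ω ∩ A).ncard ∈ sA} ∩ {ω | (P ω ∩ B).ncard ∈ sB}) =
        μ {ω | (P ω ∩ A).ncard ∈ sA} * μ {ω | (P ω ∩ B).ncard ∈ sB}

open MeasureTheory in
/-- Two point processes `P`, `P'` are independent if all their point counts are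
independent. -/
def IndepPP {Ω : Type*} [MeasurableSpace Ω] (μ : Measure Ω) {d : ℕ}
    (P P' : Ω → Set (Pt d)) : Prop :=
  ∀ A B : Set (Pt d), MeasurableSet A → MeasurableSet B → ∀ sA sB : Set ℕ,
    μ ({ω | (P ω ∩ A).ncard ∈ sA} ∩ {ω | (P' ω ∩ B).ncard ∈ sB}) =
      μ {ω | (P ω ∩ A).ncard ∈ sA} * μ {ω | (P' ω ∩ B).ncard ∈ sB}

/-- The centered cube `[-c/2, c/2]^d`. -/
def cubeC (d : ℕ) (c : ℝ) : Set (Pt d) := {x | ∀ i, |x i| ≤ c / 2}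

/-- The half-open unit cube `(-1/2, 1/2]^d + z` centered at `z`. -/
def cubeQ {d : ℕ} (z : Pt d) : Set (Pt d) :=
  {x | ∀ i, z i - 1 / 2 < x i ∧ x i ≤ z i + 1 / 2}

/-- The cube `[0, c]^d`. -/
def cube0 (d : ℕ) (c : ℝ) : Set (Pt d) := {x | ∀ i, 0 ≤ x i ∧ x i ≤ c}

/-!
Almost surely `P` and `P'` have finitely many points in every compact set, and for every such pair
of configurations the difference stabilizes deterministically. With `X = P`, `Y = P''(z)` and
`T = X ∪ Y`, the sets `T \ X` and `T \ Y` lie in the bounded cube `Q(z)`, so it suffices to compare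
`T ∩ B_n` with `X ∩ B_n`.

For a finite vertex set, `β_q^{r,s} = dim Z_q(K_r) + dim Z_{q+1}(K_s) - dim M`, where `M` is the
space of `(q+1)`-chains of `K_s` whose boundary is a `q`-chain of `K_r`. Each of the three spaces is
of the form `F(A)`, the chains of one complex on `A` with boundary in another complex on `A`, and
`F(T ∩ B_n) / F(X ∩ B_n)` embeds into `F(T ∩ B_m) / F(X ∩ B_m)` for `n ≤ m`. Simplices at scale `t`
have diameter at most `2t`, so a simplex of `T` not contained in `X` lies in the finite set `G` of
points of `T` within `2 max(r, s)` of `Q(z)`, and these quotients have dimension at most `dim C(G)`.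
A bounded nondecreasing sequence of naturals is eventually constant.
-/

open Module Filter

theorem Nat.exists_eventually_eq_of_monotone {a : ℕ → ℕ} (ha : Monotone a)
    (hb : BddAbove (Set.range a)) :
    ∃ c, ∀ᶠ n in atTop, a n = c := by
  have := tendsto_atTop_ciSup ha hb
  rw [nhds_discrete, tendsto_pure] at this
  exact ⟨_, this⟩

namespace Submodule

variable {K M M₂ : Type*} [DivisionRing K] [AddCommGroup M] [Module K M] [AddCommGroup M₂]
  [Module K M₂]

/-- `A / (A ⊓ B')` embeds into `A' / B'`. -/
theorem finrank_add_finrank_le_of_inf_le {A B A' B' : Submodule K M}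
    [FiniteDimensional K A'] [FiniteDimensional K B] (hA : A ≤ A') (hB' : B' ≤ A')
    (hinf : A ⊓ B' ≤ B) :
    finrank K A + finrank K B' ≤ finrank K A' + finrank K B := by
  have := finiteDimensional_of_le hA
  have := finiteDimensional_of_le hB'
  have := finrank_sup_add_finrank_inf_eq A B'
  have := finrank_mono (sup_le hA hB')
  have := finrank_mono hinf
  omega

theorem exists_eventually_finrank_sub_eq (u u' : ℕ → Submodule K M)
    [∀ n, FiniteDimensional K (u' n)] (hle : ∀ n, u n ≤ u' n) (hmono : Monotone u')
    (hinf : ∀ n m, n ≤ m → u' n ⊓ u m ≤ u n) (b : ℕ)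
    (hb : ∀ n, finrank K (u' n) ≤ finrank K (u n) + b) :
    ∃ c : ℤ, ∀ᶠ n in atTop, (finrank K (u' n) : ℤ) - finrank K (u n) = c := by
  have _ n : FiniteDimensional K (u n) := finiteDimensional_of_le (hle n)
  have hrank n : finrank K (u n) ≤ finrank K (u' n) := finrank_mono (hle n)
  obtain ⟨c, hc⟩ := Nat.exists_eventually_eq_of_monotone
    (a := fun n => finrank K (u' n) - finrank K (u n))
    (fun n m hnm => by
      have := finrank_add_finrank_le_of_inf_le (hmono hnm) (hle m) (hinf n m hnm)
      have := hrank n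
      have := hrank m
      dsimp only
      omega)
    ⟨b, by rintro _ ⟨n, rfl⟩; have := hb n; dsimp only; omega⟩
  refine ⟨c, hc.mono fun n hn => ?_⟩
  have := hrank n
  omega

theorem finrank_comap_subtype (p p' : Submodule K M) :
    finrank K (p'.comap p.subtype) = finrank K (p ⊓ p' : Submodule K M) := by
  rw [← map_comap_subtype]
  exact (equivMapOfInjective _ p.injective_subtype _).finrank_eq

theorem finrank_map_add_finrank_inf_ker (f : M →ₗ[K] M₂) (p : Submodule K M)
    [FiniteDimensional K p] :
    finrank K (p.map f) + finrank K (p ⊓ LinearMap.ker f : Submodule K M) = finrank K p := by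
  rw [← LinearMap.range_domRestrict, ← finrank_comap_subtype,
    ← LinearMap.ker_domRestrict]
  exact LinearMap.finrank_range_add_finrank_ker _

end Submodule

section Chains

variable {V : Type*}

noncomputable def chainsOn (A : Set V) : Submodule (ZMod 2) (Chain V) :=
  Finsupp.supported (ZMod 2) (ZMod 2) {τ : Finset V | ↑τ ⊆ A}

def inducedCx (K : Set (Finset V)) (A : Set V) : Set (Finset V) :=
  {σ ∈ K | ↑σ ⊆ A}

noncomputable def chainsWithBdryIn (K : Set (Finset V)) (k : ℕ) (K' : Set (Finset V))
    (k' : ℕ) : Submodule (ZMod 2) (Chain V) :=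
  chainGroup K k ⊓ (chainGroup K' k').comap (bdry V)

open scoped Classical in
theorem bdry_single_one (σ : Finset V) :
    bdry V (Finsupp.single σ 1) = ∑ x ∈ σ, Finsupp.single (σ.erase x) 1 := by
  simp only [bdry, Finsupp.lsum_single, LinearMap.toSpanSingleton_apply, one_smul]

theorem bdry_comp_bdry : bdry V ∘ₗ bdry V = 0 := by
  classical
  refine Finsupp.lhom_ext' fun σ => LinearMap.ext_ring ?_
  simp only [LinearMap.comp_apply, Finsupp.lsingle_apply, LinearMap.zero_apply,
    bdry_single_one, map_sum]
  rw [Finset.sum_sigma']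
  -- the faces `σ \ {x, y}` and `σ \ {y, x}` cancel in characteristic two
  refine Finset.sum_involution (fun p _ => ⟨p.2, p.1⟩) (fun p _ => ?_) (fun p hp _ h => ?_)
    (fun p hp => ?_) (fun _ _ => rfl)
  · rw [Finset.erase_right_comm, ← Finsupp.single_add, CharTwo.add_self_eq_zero,
      Finsupp.single_zero]
  · simp only [Finset.mem_sigma, Finset.mem_erase] at hp
    exact hp.2.1 (congrArg Sigma.fst h)
  · simp only [Finset.mem_sigma, Finset.mem_erase] at hp ⊢
    exact ⟨hp.2.2, fun h => hp.2.1 h.symm, hp.1⟩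

theorem bdry_bdry (c : Chain V) : bdry V (bdry V c) = 0 :=
  LinearMap.congr_fun bdry_comp_bdry c

theorem map_bdry_chainsOn_le (A : Set V) : (chainsOn A).map (bdry V) ≤ chainsOn A := by
  classical
  rw [chainsOn, Finsupp.supported_eq_span_single, Submodule.map_span_le]
  rintro _ ⟨σ, hσ, rfl⟩
  rw [← Finsupp.supported_eq_span_single, bdry_single_one]
  exact Submodule.sum_mem _ fun x _ =>
    Finsupp.single_mem_supported _ _ ((Finset.coe_subset.2 (σ.erase_subset x)).trans hσ)

theorem chainsOn_inf (A B : Set V) : chainsOn A ⊓ chainsOn B = chainsOn (A ∩ B) := by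
  rw [chainsOn, chainsOn, chainsOn, ← Finsupp.supported_inter]
  simp only [Set.subset_inter_iff, Set.ofPred_and]

theorem finiteDimensional_chainsOn {A : Set V} (hA : A.Finite) :
    FiniteDimensional (ZMod 2) (chainsOn A) := by
  have : {τ : Finset V | ↑τ ⊆ A}.Finite :=
    hA.finite_subsets.preimage Finset.coe_injective.injOn
  rw [chainsOn, Finsupp.supported_eq_span_single]
  exact FiniteDimensional.span_of_finite _ (this.image _)

theorem chainGroup_eq_supported (K : Set (Finset V)) (k : ℕ) :
    chainGroup K k = Finsupp.supported (ZMod 2) (ZMod 2) {σ | σ ∈ K ∧ σ.card = k + 1} := by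
  rw [Finsupp.supported_eq_span_single, chainGroup]
  congr 1
  ext c
  simp only [Set.mem_ofPred_eq, Set.mem_image]
  grind

theorem chainGroup_mono {K K' : Set (Finset V)} (h : K ⊆ K') (k : ℕ) :
    chainGroup K k ≤ chainGroup K' k :=
  Submodule.span_mono fun _ ⟨σ, hσ, hcard, hc⟩ => ⟨σ, h hσ, hcard, hc⟩

theorem inducedCx_mono (K : Set (Finset V)) {A B : Set V} (h : A ⊆ B) :
    inducedCx K A ⊆ inducedCx K B :=
  fun _ hσ => ⟨hσ.1, hσ.2.trans h⟩

theorem chainGroup_inducedCx (K : Set (Finset V)) (A : Set V) (k : ℕ) :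
    chainGroup (inducedCx K A) k = chainGroup K k ⊓ chainsOn A := by
  rw [chainGroup_eq_supported, chainGroup_eq_supported, chainsOn, ← Finsupp.supported_inter]
  congr 1
  ext σ
  simp only [inducedCx, Set.mem_ofPred_eq, Set.mem_inter_iff]
  tauto

theorem chainGroup_inducedCx_inf (K : Set (Finset V)) (A B : Set V) (k : ℕ) :
    chainGroup (inducedCx K A) k ⊓ chainGroup (inducedCx K B) k =
      chainGroup (inducedCx K (A ∩ B)) k := by
  rw [chainGroup_inducedCx, chainGroup_inducedCx, chainGroup_inducedCx, ← chainsOn_inf,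
    inf_inf_inf_comm, inf_idem]

theorem finiteDimensional_chainGroup_inducedCx (K : Set (Finset V)) (k : ℕ) {A : Set V}
    (hA : A.Finite) : FiniteDimensional (ZMod 2) (chainGroup (inducedCx K A) k) := by
  have := finiteDimensional_chainsOn hA
  rw [chainGroup_inducedCx]
  exact Submodule.finiteDimensional_of_le inf_le_right

theorem inducedCx_empty (A : Set V) : inducedCx ∅ A = ∅ :=
  Set.eq_empty_of_forall_notMem fun _ h => h.1

theorem chainsWithBdryIn_mono {K₁ K₂ K₁' K₂' : Set (Finset V)} (h : K₁ ⊆ K₂) (h' : K₁' ⊆ K₂')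
    (k k' : ℕ) : chainsWithBdryIn K₁ k K₁' k' ≤ chainsWithBdryIn K₂ k K₂' k' :=
  inf_le_inf (chainGroup_mono h k) (Submodule.comap_mono (chainGroup_mono h' k'))

theorem cycleGroup_eq_chainsWithBdryIn (K : Set (Finset V)) (k : ℕ) :
    cycleGroup K k = chainsWithBdryIn K k ∅ 0 := by
  have : chainGroup (∅ : Set (Finset V)) 0 = ⊥ := by
    simp [chainGroup]
  rw [cycleGroup, chainsWithBdryIn, this, Submodule.comap_bot]

/-- A chain supported in `B` has its boundary supported in `B`. -/
theorem chainsWithBdryIn_inf_chainGroup_le (K K' : Set (Finset V)) (k k' : ℕ)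
    (A B : Set V) :
    chainsWithBdryIn (inducedCx K A) k (inducedCx K' A) k' ⊓ chainGroup (inducedCx K B) k ≤
      chainsWithBdryIn (inducedCx K B) k (inducedCx K' B) k' := by
  intro c hc
  simp only [chainsWithBdryIn, Submodule.mem_inf, Submodule.mem_comap, chainGroup_inducedCx]
    at hc ⊢
  exact ⟨hc.2, hc.1.2.1, map_bdry_chainsOn_le B ⟨c, hc.2.2, rfl⟩⟩

theorem chainGroup_inducedCx_le_sup (K : Set (Finset V)) (k : ℕ) {X T G : Set V}
    (hK : ∀ σ ∈ K, ↑σ ⊆ T → ↑σ ⊆ X ∨ ↑σ ⊆ G) :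
    chainGroup (inducedCx K T) k ≤ chainGroup (inducedCx K X) k ⊔ chainsOn G := by
  refine Submodule.span_le.2 ?_
  rintro _ ⟨σ, ⟨hσK, hσT⟩, hcard, rfl⟩
  rcases hK σ hσK hσT with hσX | hσG
  · exact Submodule.mem_sup_left (Submodule.subset_span ⟨σ, ⟨hσK, hσX⟩, hcard, rfl⟩)
  · exact Submodule.mem_sup_right (Finsupp.single_mem_supported _ _ hσG)

end Chains

section PersistentBetti
variable {V : Type*}

/-- `Z_q(K_r) ∩ B_q(K_s)` is the image under `∂` of the `(q+1)`-chains of `K_s` with boundary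
in `K_r`, and the kernel of `∂` on those chains is `Z_{q+1}(K_s)`. -/
theorem pBetti_add_finrank_chainsWithBdryIn (Kf : ℝ → Set (Finset V)) (q : ℕ) (r s : ℝ)
    [FiniteDimensional (ZMod 2) (chainGroup (Kf r) q)]
    [FiniteDimensional (ZMod 2) (chainGroup (Kf s) (q + 1))] :
    pBetti Kf q r s + finrank (ZMod 2) (chainsWithBdryIn (Kf s) (q + 1) (Kf r) q) =
      finrank (ZMod 2) (cycleGroup (Kf r) q) +
        finrank (ZMod 2) (cycleGroup (Kf s) (q + 1)) := by
  set M := chainsWithBdryIn (Kf s) (q + 1) (Kf r) q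
  have : FiniteDimensional (ZMod 2) M := Submodule.finiteDimensional_of_le inf_le_left
  have : FiniteDimensional (ZMod 2) (cycleGroup (Kf r) q) :=
    Submodule.finiteDimensional_of_le inf_le_left
  have hmap : M.map (bdry V) = cycleGroup (Kf r) q ⊓ boundaryGroup (Kf s) q := by
    refine le_antisymm ?_ ?_
    · rintro _ ⟨c, ⟨hcs, hcr⟩, rfl⟩
      exact ⟨⟨hcr, bdry_bdry c⟩, c, hcs, rfl⟩
    · rintro _ ⟨⟨hx, -⟩, c, hc, rfl⟩
      exact ⟨c, ⟨hc, hx⟩, rfl⟩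
  have hker : M ⊓ LinearMap.ker (bdry V) = cycleGroup (Kf s) (q + 1) := by
    ext c
    simp only [M, chainsWithBdryIn, cycleGroup, Submodule.mem_inf, Submodule.mem_comap,
      LinearMap.mem_ker]
    constructor
    · rintro ⟨⟨hc, -⟩, h⟩
      exact ⟨hc, h⟩
    · rintro ⟨hc, h⟩
      exact ⟨⟨hc, h ▸ Submodule.zero_mem _⟩, h⟩
  have hquot : pBetti Kf q r s +
      finrank (ZMod 2) ((boundaryGroup (Kf s) q).comap (cycleGroup (Kf r) q).subtype) =
        finrank (ZMod 2) (cycleGroup (Kf r) q) :=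
    Submodule.finrank_quotient_add_finrank _
  have hrank := Submodule.finrank_map_add_finrank_inf_ker (bdry V) M
  rw [Submodule.finrank_comap_subtype] at hquot
  rw [hmap, hker] at hrank
  omega

end PersistentBetti

section Stabilization
variable {V : Type*}

theorem chainsWithBdryIn_inducedCx_inf_le (K K' : Set (Finset V)) (k k' : ℕ) (A B : Set V) :
    chainsWithBdryIn (inducedCx K A) k (inducedCx K' A) k' ⊓
        chainsWithBdryIn (inducedCx K B) k (inducedCx K' B) k' ≤
      chainsWithBdryIn (inducedCx K (A ∩ B)) k (inducedCx K' (A ∩ B)) k' := by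
  refine le_trans (le_inf inf_le_left ?_) (chainsWithBdryIn_inf_chainGroup_le K K' k k' A _)
  rw [← chainGroup_inducedCx_inf]
  exact inf_le_inf inf_le_left inf_le_left

theorem finrank_chainsWithBdryIn_inducedCx_le (K K' : Set (Finset V)) (k k' : ℕ)
    {X T G : Set V} (hX : X.Finite) (hG : G.Finite)
    (hK : ∀ σ ∈ K, ↑σ ⊆ T → ↑σ ⊆ X ∨ ↑σ ⊆ G) :
    finrank (ZMod 2) (chainsWithBdryIn (inducedCx K T) k (inducedCx K' T) k') ≤
      finrank (ZMod 2) (chainsWithBdryIn (inducedCx K X) k (inducedCx K' X) k') +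
        finrank (ZMod 2) (chainsOn G) := by
  have := finiteDimensional_chainGroup_inducedCx K k hX
  have := finiteDimensional_chainsOn hG
  have : FiniteDimensional (ZMod 2) (chainsWithBdryIn (inducedCx K X) k (inducedCx K' X) k') :=
    Submodule.finiteDimensional_of_le inf_le_left
  have hkey := Submodule.finrank_add_finrank_le_of_inf_le
    (A := chainsWithBdryIn (inducedCx K T) k (inducedCx K' T) k')
    (inf_le_left.trans (chainGroup_inducedCx_le_sup K k hK)) le_sup_left
    (chainsWithBdryIn_inf_chainGroup_le K K' k k' T X)
  have hsup := Submodule.finrank_add_le_finrank_add_finrank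
    (chainGroup (inducedCx K X) k) (chainsOn G)
  omega

theorem exists_eventually_finrank_chainsWithBdryIn_sub_eq (K K' : Set (Finset V)) (k k' : ℕ)
    {X T G : Set V} {B : ℕ → Set V} (hXT : X ⊆ T) (hB : Monotone B)
    (hTB : ∀ n, (T ∩ B n).Finite) (hG : G.Finite)
    (hK : ∀ σ ∈ K, ↑σ ⊆ T → ↑σ ⊆ X ∨ ↑σ ⊆ G) :
    ∃ c : ℤ, ∀ᶠ n in atTop,
      (finrank (ZMod 2)
          (chainsWithBdryIn (inducedCx K (T ∩ B n)) k (inducedCx K' (T ∩ B n)) k') : ℤ) -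
        finrank (ZMod 2)
          (chainsWithBdryIn (inducedCx K (X ∩ B n)) k (inducedCx K' (X ∩ B n)) k') = c := by
  set F : Set V → Submodule (ZMod 2) (Chain V) :=
    fun A => chainsWithBdryIn (inducedCx K A) k (inducedCx K' A) k'
  have hF : Monotone F := fun _ _ h =>
    chainsWithBdryIn_mono (inducedCx_mono K h) (inducedCx_mono K' h) k k'
  have _ n : FiniteDimensional (ZMod 2) (F (T ∩ B n)) :=
    have := finiteDimensional_chainGroup_inducedCx K k (hTB n)
    Submodule.finiteDimensional_of_le inf_le_left
  refine Submodule.exists_eventually_finrank_sub_eq (fun n => F (X ∩ B n))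
    (fun n => F (T ∩ B n)) (fun n => hF (Set.inter_subset_inter_left _ hXT))
    (fun n m h => hF (Set.inter_subset_inter_right _ (hB h)))
    (fun n m h => (chainsWithBdryIn_inducedCx_inf_le K K' k k' _ _).trans
      (hF fun x hx => ⟨hx.2.1, hx.1.2⟩))
    (finrank (ZMod 2) (chainsOn G)) fun n => ?_
  refine finrank_chainsWithBdryIn_inducedCx_le K K' k k'
    ((hTB n).subset (Set.inter_subset_inter_left _ hXT)) hG fun σ hσ hσT => ?_
  exact (hK σ hσ (hσT.trans Set.inter_subset_left)).imp_left
    fun hσX => Set.subset_inter hσX (hσT.trans Set.inter_subset_right)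

theorem pBetti_inducedCx_eq (L : ℝ → Set (Finset V)) (q : ℕ) (r s : ℝ) {A : Set V}
    (hA : A.Finite) :
    (pBetti (fun t => inducedCx (L t) A) q r s : ℤ) =
      finrank (ZMod 2) (chainsWithBdryIn (inducedCx (L r) A) q (inducedCx ∅ A) 0) +
        finrank (ZMod 2) (chainsWithBdryIn (inducedCx (L s) A) (q + 1) (inducedCx ∅ A) 0) -
        finrank (ZMod 2)
          (chainsWithBdryIn (inducedCx (L s) A) (q + 1) (inducedCx (L r) A) q) := by
  have := finiteDimensional_chainGroup_inducedCx (L r) q hA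
  have := finiteDimensional_chainGroup_inducedCx (L s) (q + 1) hA
  have := pBetti_add_finrank_chainsWithBdryIn (fun t => inducedCx (L t) A) q r s
  rw [cycleGroup_eq_chainsWithBdryIn, cycleGroup_eq_chainsWithBdryIn, ← inducedCx_empty A]
    at this
  omega

theorem exists_eventually_pBetti_inducedCx_sub_eq (L : ℝ → Set (Finset V)) (q : ℕ) (r s : ℝ)
    {X T G : Set V} {B : ℕ → Set V} (hXT : X ⊆ T) (hB : Monotone B)
    (hTB : ∀ n, (T ∩ B n).Finite) (hG : G.Finite)
    (hL : ∀ t ∈ ({r, s} : Set ℝ), ∀ σ ∈ L t, ↑σ ⊆ T → ↑σ ⊆ X ∨ ↑σ ⊆ G) :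
    ∃ c : ℤ, ∀ᶠ n in atTop,
      (pBetti (fun t => inducedCx (L t) (T ∩ B n)) q r s : ℤ) -
        pBetti (fun t => inducedCx (L t) (X ∩ B n)) q r s = c := by
  obtain ⟨c₁, h₁⟩ := exists_eventually_finrank_chainsWithBdryIn_sub_eq (L r) ∅ q 0
    hXT hB hTB hG (hL r (by simp))
  obtain ⟨c₂, h₂⟩ := exists_eventually_finrank_chainsWithBdryIn_sub_eq (L s) ∅ (q + 1) 0
    hXT hB hTB hG (hL s (by simp))
  obtain ⟨c₃, h₃⟩ := exists_eventually_finrank_chainsWithBdryIn_sub_eq (L s) (L r) (q + 1) q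
    hXT hB hTB hG (hL s (by simp))
  refine ⟨c₁ + c₂ - c₃, (h₁.and (h₂.and h₃)).mono fun n ⟨e₁, e₂, e₃⟩ => ?_⟩
  rw [pBetti_inducedCx_eq L q r s (hTB n),
    pBetti_inducedCx_eq L q r s ((hTB n).subset (Set.inter_subset_inter_left _ hXT))]
  omega

end Stabilization

section Euclidean
open Set Bornology Metric

theorem subset_or_subset_inter_closedBall {V : Type*} [PseudoMetricSpace V] {σ : Finset V}
    {X T : Set V} {c : V} {R ρ : ℝ} (hσT : ↑σ ⊆ T) (hσ : ∀ x ∈ σ, ∀ y ∈ σ, dist x y ≤ ρ)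
    (hTX : T \ X ⊆ closedBall c R) : ↑σ ⊆ X ∨ ↑σ ⊆ T ∩ closedBall c (R + ρ) := by
  refine or_iff_not_imp_left.2 fun hσX => ?_
  obtain ⟨x₀, hx₀σ, hx₀X⟩ := not_subset.1 hσX
  have hx₀ : dist x₀ c ≤ R := hTX ⟨hσT hx₀σ, hx₀X⟩
  refine fun y hy => ⟨hσT hy, ?_⟩
  have := hσ y hy x₀ hx₀σ
  rw [mem_closedBall]
  linarith [dist_triangle y x₀ c]

theorem finite_inter_of_isBounded {V : Type*} [PseudoMetricSpace V] [ProperSpace V]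
    {T C : Set V} (hT : ∀ C, IsCompact C → (T ∩ C).Finite) (hC : IsBounded C) :
    (T ∩ C).Finite :=
  (hT _ hC.isCompact_closure).subset (inter_subset_inter_right _ subset_closure)

variable {d : ℕ}

theorem inducedCx_univ_of_cech_or_rips {Kx : ℝ → Set (Pt d) → Set (Finset (Pt d))}
    (hKx : Kx = cechCx d ∨ Kx = ripsCx d) (t : ℝ) (A : Set (Pt d)) :
    Kx t A = inducedCx (Kx t univ) A := by
  rcases hKx with rfl | rfl <;>
  · ext σ
    simp only [cechCx, ripsCx, inducedCx, mem_ofPred_eq, subset_univ, true_and]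
    tauto

theorem dist_le_of_cech_or_rips {Kx : ℝ → Set (Pt d) → Set (Finset (Pt d))}
    (hKx : Kx = cechCx d ∨ Kx = ripsCx d) {t : ℝ} {A : Set (Pt d)} {σ : Finset (Pt d)}
    (hσ : σ ∈ Kx t A) {x y : Pt d} (hx : x ∈ σ) (hy : y ∈ σ) : dist x y ≤ 2 * t := by
  rcases hKx with rfl | rfl
  · obtain ⟨p, hp⟩ := hσ.2.2
    simp only [mem_iInter, Finset.mem_coe, mem_closedBall] at hp
    linarith [dist_triangle_left x y p, hp x hx, hp y hy]
  · have := dist_le_diam_of_mem σ.finite_toSet.isBounded hx hy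
    linarith [hσ.2.2, diam_nonneg (s := (σ : Set (Pt d)))]

theorem exists_eventually_pBettiPts_sub_eq_of_subset
    {Kx : ℝ → Set (Pt d) → Set (Finset (Pt d))} (hKx : Kx = cechCx d ∨ Kx = ripsCx d)
    (q : ℕ) (r s : ℝ) {X T : Set (Pt d)} {B : ℕ → Set (Pt d)} (hXT : X ⊆ T)
    (hT : ∀ C, IsCompact C → (T ∩ C).Finite) (hTX : IsBounded (T \ X)) (hB : Monotone B)
    (hBb : ∀ n, IsBounded (B n)) :
    ∃ c : ℤ, ∀ᶠ n in atTop,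
      (pBettiPts Kx q r s (T ∩ B n) : ℤ) - pBettiPts Kx q r s (X ∩ B n) = c := by
  obtain ⟨R, hR⟩ := hTX.subset_closedBall 0
  have hβ A : pBettiPts Kx q r s A = pBetti (fun t => inducedCx (Kx t univ) A) q r s := by
    simp only [pBettiPts, ← inducedCx_univ_of_cech_or_rips hKx]
  simp only [hβ]
  refine exists_eventually_pBetti_inducedCx_sub_eq _ q r s hXT hB
    (fun n => finite_inter_of_isBounded hT (hBb n))
    (finite_inter_of_isBounded hT isBounded_closedBall)
    fun t ht σ hσ hσT => subset_or_subset_inter_closedBall (ρ := 2 * max r s) hσT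
      (fun x hx y hy => (dist_le_of_cech_or_rips hKx hσ hx hy).trans ?_) hR
  rcases ht with rfl | rfl <;> simp

theorem exists_eventually_pBettiPts_sub_eq
    {Kx : ℝ → Set (Pt d) → Set (Finset (Pt d))} (hKx : Kx = cechCx d ∨ Kx = ripsCx d)
    (q : ℕ) (r s : ℝ) {X Y W : Set (Pt d)} {B : ℕ → Set (Pt d)}
    (hX : ∀ C, IsCompact C → (X ∩ C).Finite) (hY : ∀ C, IsCompact C → (Y ∩ C).Finite)
    (hW : IsBounded W) (hXY : X \ W = Y \ W) (hB : Monotone B) (hBb : ∀ n, IsBounded (B n)) :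
    ∃ c : ℤ, ∀ᶠ n in atTop,
      (pBettiPts Kx q r s (X ∩ B n) : ℤ) - pBettiPts Kx q r s (Y ∩ B n) = c := by
  have hT C (hC : IsCompact C) : ((X ∪ Y) ∩ C).Finite := by
    rw [union_inter_distrib_right]
    exact (hX C hC).union (hY C hC)
  have hYX : (X ∪ Y) \ X ⊆ W := by
    rw [union_sdiff_left]
    exact fun x hx => by_contra fun hxW => hx.2 (hXY.symm ▸ ⟨hx.1, hxW⟩ : x ∈ X \ W).1
  have hXY' : (X ∪ Y) \ Y ⊆ W := by
    rw [union_sdiff_right]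
    exact fun x hx => by_contra fun hxW => hx.2 (hXY ▸ ⟨hx.1, hxW⟩ : x ∈ Y \ W).1
  obtain ⟨c₁, h₁⟩ := exists_eventually_pBettiPts_sub_eq_of_subset hKx q r s
    subset_union_left hT (hW.subset hYX) hB hBb
  obtain ⟨c₂, h₂⟩ := exists_eventually_pBettiPts_sub_eq_of_subset hKx q r s
    subset_union_right hT (hW.subset hXY') hB hBb
  exact ⟨c₂ - c₁, (h₁.and h₂).mono fun n ⟨e₁, e₂⟩ => by omega⟩

theorem isBounded_ofLp_preimage_Icc (a b : Fin d → ℝ) :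
    IsBounded (WithLp.ofLp ⁻¹' Icc a b : Set (Pt d)) :=
  (PiLp.antilipschitzWith_ofLp 2 _).isBounded_preimage (isBounded_Icc a b)

theorem isBounded_cubeC (c : ℝ) : IsBounded (cubeC d c) :=
  (isBounded_ofLp_preimage_Icc (fun _ => -(c / 2)) fun _ => c / 2).subset
    fun _ hx => ⟨fun i => (abs_le.1 (hx i)).1, fun i => (abs_le.1 (hx i)).2⟩

theorem isBounded_cubeQ (z : Pt d) : IsBounded (cubeQ z) :=
  (isBounded_ofLp_preimage_Icc (fun i => z i - 1 / 2) fun i => z i + 1 / 2).subset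
    fun _ hx => ⟨fun i => (hx i).1.le, fun i => (hx i).2⟩

theorem monotone_cubeC_rpow : Monotone fun n : ℕ => cubeC d ((n : ℝ) ^ ((1 : ℝ) / d)) :=
  fun _ _ h _ hx i => (hx i).trans (by gcongr)

end Euclidean

open MeasureTheory in
theorem exists_forall_ge_eq_of_ae_eventually {Ω β : Type*} [MeasurableSpace Ω]
    {μ : Measure Ω} [Nonempty β] {f : Ω → ℕ → β}
    (h : ∀ᵐ ω ∂μ, ∃ c, ∀ᶠ n in atTop, f ω n = c) :
    ∃ (Δ : Ω → β) (N₀ : Ω → ℕ), ∀ᵐ ω ∂μ, ∀ n, N₀ ω ≤ n → f ω n = Δ ω := by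
  have (ω : Ω) : ∃ c N, (∃ c, ∀ᶠ n in atTop, f ω n = c) → ∀ n, N ≤ n → f ω n = c := by
    by_cases hω : ∃ c, ∀ᶠ n in atTop, f ω n = c
    · obtain ⟨c, hc⟩ := hω
      obtain ⟨N, hN⟩ := eventually_atTop.1 hc
      exact ⟨c, N, fun _ => hN⟩
    · exact ⟨Classical.arbitrary β, 0, fun h => absurd h hω⟩
  choose Δ N₀ hΔ using this
  exact ⟨Δ, N₀, h.mono fun ω hω => hΔ ω hω⟩

open MeasureTheory in
theorem as_stabilization_resampling_general {Ω : Type*} [MeasurableSpace Ω]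
    (μ : Measure Ω) {d : ℕ}
    (P P' : Ω → Set (Pt d))
    (hP : IsPoissonPP μ (fun _ : Pt d => (1 : ℝ)) P)
    (hP' : IsPoissonPP μ (fun _ : Pt d => (1 : ℝ)) P')
    (z : Fin d → ℤ)
    (Kx : ℝ → Set (Pt d) → Set (Finset (Pt d))) (hKx : Kx = cechCx d ∨ Kx = ripsCx d)
    (q : ℕ) (r s : ℝ) :
    ∃ (Δ : Ω → ℤ) (N₀ : Ω → ℕ), ∀ᵐ ω ∂μ, ∀ n : ℕ, N₀ ω ≤ n →
      (pBettiPts Kx q r s (P ω ∩ cubeC d ((n : ℝ) ^ ((1 : ℝ) / d))) : ℤ) -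
        (pBettiPts Kx q r s
          (((P ω \ cubeQ (WithLp.toLp 2 (fun i => (z i : ℝ)) : Pt d)) ∪
              (P' ω ∩ cubeQ (WithLp.toLp 2 (fun i => (z i : ℝ)) : Pt d))) ∩
            cubeC d ((n : ℝ) ^ ((1 : ℝ) / d))) : ℤ) = Δ ω := by
  refine exists_forall_ge_eq_of_ae_eventually ?_
  filter_upwards [hP.locallyFinite, hP'.locallyFinite] with ω hPω hP'ω
  set W := cubeQ (WithLp.toLp 2 (fun i => (z i : ℝ)) : Pt d)
  have hY C (hC : IsCompact C) : ((P ω \ W ∪ P' ω ∩ W) ∩ C).Finite :=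
    ((hPω C hC).union (hP'ω C hC)).subset <| by
      rw [← Set.union_inter_distrib_right]
      exact Set.inter_subset_inter_left _
        (Set.union_subset_union Set.sdiff_subset Set.inter_subset_left)
  refine exists_eventually_pBettiPts_sub_eq (W := W) hKx q r s hPω hY (isBounded_cubeQ _) ?_
    monotone_cubeC_rpow fun _ => isBounded_cubeC _
  ext x
  simp only [Set.mem_sdiff, Set.mem_union, Set.mem_inter_iff]
  tauto

open MeasureTheory in
/-- Almost-sure stabilization of the resampling difference for a
stationary Poisson process: let `P`, `P'` be independent unit-intensity homogeneous
Poisson processes on `ℝ^d`, `z ∈ ℤ^d`, `Q(z) = (−1/2,1/2]^d + z`,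
`P''(z) = (P \ Q(z)) ∪ (P' ∩ Q(z))` and `B_n = [−n^{1/d}/2, n^{1/d}/2]^d`.  Then for each
`0 ≤ r ≤ s` there exist an a.s. finite integer-valued random variable `Δ` and an a.s.
finite random index `N₀` such that
`β_q^{r,s}(K(P ∩ B_n)) − β_q^{r,s}(K(P''(z) ∩ B_n)) = Δ` a.s. for all `n ≥ N₀`. -/
theorem as_stabilization_resampling {Ω : Type*} [MeasurableSpace Ω]
    (μ : Measure Ω) [IsProbabilityMeasure μ] {d : ℕ} (hd : 1 ≤ d)
    (P P' : Ω → Set (Pt d))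
    (hP : IsPoissonPP μ (fun _ : Pt d => (1 : ℝ)) P)
    (hP' : IsPoissonPP μ (fun _ : Pt d => (1 : ℝ)) P')
    (hind : IndepPP μ P P')
    (z : Fin d → ℤ)
    (Kx : ℝ → Set (Pt d) → Set (Finset (Pt d))) (hKx : Kx = cechCx d ∨ Kx = ripsCx d)
    (q : ℕ) (r s : ℝ) (hr : 0 ≤ r) (hrs : r ≤ s) :
    ∃ (Δ : Ω → ℤ) (N₀ : Ω → ℕ), ∀ᵐ ω ∂μ, ∀ n : ℕ, N₀ ω ≤ n →
      (pBettiPts Kx q r s (P ω ∩ cubeC d ((n : ℝ) ^ ((1 : ℝ) / d))) : ℤ) -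
        (pBettiPts Kx q r s
          (((P ω \ cubeQ (WithLp.toLp 2 (fun i => (z i : ℝ)) : Pt d)) ∪
              (P' ω ∩ cubeQ (WithLp.toLp 2 (fun i => (z i : ℝ)) : Pt d))) ∩
            cubeC d ((n : ℝ) ^ ((1 : ℝ) / d))) : ℤ) = Δ ω :=
  as_stabilization_resampling_general μ P P' hP hP' z Kx hKx q r s
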